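/- arXiv:2402.17223 — 5 statements merged into one kernel-verified Lean document; each statement's English description precedes it below -/
import Mathlib

section
/- For every real number I, all integers m ≥ 1, and all integers l and n with 0 ≤ n < l, the success-probability function satisfies the two-dimensional random-walk recursion F_I(l,m,n) = I·F_I(l,m−1,n) + (1−I)·F_I(l,m+1,n+1). -/
/-!
Split a first-passage path at its first step. After a down-step what remains is a first-passage
path from `m` with the same number `i` of up-steps; after an up-step it is one from `m + 2` with
`i - 1` up-steps. Hence `a(i, m+1) = a(i, m) + a(i-1, m+2)` (with `a(-1, ·) = 0`), and weighting
by `(1-I)^i I^(m+2+i)` turns this into the recursion; the up-step term has one fewer summand,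
which is the shift from `n` to `n + 1`.
-/

/-- `pathCount i m` is the number of sequences `(s 1, …, s (m+2i+1))` with every entry `±1`,
exactly `i` entries equal to `+1` (hence `m+i+1` entries equal to `-1`), such that
`m + s 1 + ⋯ + s T ≥ 0` for every `T ≤ m + 2i` (the walk started at `m` first reaches `-1`
exactly at the final step). -/
noncomputable def pathCount (i m : ℕ) : ℕ :=
  Nat.card {s : Fin (m + 2 * i + 1) → ℤ //
    (∀ t, s t = 1 ∨ s t = -1) ∧
    (Finset.univ.filter fun t => s t = 1).card = i ∧
    ∀ T : ℕ, T ≤ m + 2 * i →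
      0 ≤ (m : ℤ) + ∑ t ∈ Finset.univ.filter (fun t : Fin (m + 2 * i + 1) => (t : ℕ) < T), s t}

/-- `F I l m n = ∑_{i=0}^{l-n-1} a(i,m) (1-I)^i I^(m+1+i)`, the probability that the
attacker's branch, lagging `m` blocks behind when the honest branch has already grown by `n`
blocks, surpasses the honest branch before the honest branch grows by `l` blocks. -/
noncomputable def F (I : ℝ) (l m n : ℕ) : ℝ :=
  ∑ i ∈ Finset.range (l - n), (pathCount i m : ℝ) * (1 - I) ^ i * I ^ (m + 1 + i)

open Finset

namespace FirstPassage

variable {N L : ℕ}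

def prefixSum (s : Fin N → ℤ) (T : ℕ) : ℤ :=
  ∑ t ∈ univ.filter (fun t : Fin N => (t : ℕ) < T), s t

@[simp]
lemma prefixSum_zero (s : Fin N → ℤ) : prefixSum s 0 = 0 := by
  simp [prefixSum]

@[simp]
lemma prefixSum_cons_succ (a : ℤ) (v : Fin L → ℤ) (T : ℕ) :
    prefixSum (Fin.cons a v : Fin (L + 1) → ℤ) (T + 1) = a + prefixSum v T := by
  simp only [prefixSum, sum_filter, Fin.sum_univ_succ]
  simp

lemma card_filter_cons_eq_one (a : ℤ) (v : Fin L → ℤ) :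
    #{t | (Fin.cons a v : Fin (L + 1) → ℤ) t = 1} = (if a = 1 then 1 else 0) + #{t | v t = 1} := by
  simp only [card_filter, Fin.sum_univ_succ]
  simp

lemma forall_le_succ_prefixSum_cons (c a : ℤ) (hc : 0 ≤ c) (B : ℕ) (v : Fin L → ℤ) :
    (∀ T ≤ B + 1, 0 ≤ c + prefixSum (Fin.cons a v : Fin (L + 1) → ℤ) T) ↔
      ∀ T ≤ B, 0 ≤ c + a + prefixSum v T := by
  constructor
  · intro h T hT
    simpa [add_assoc] using h (T + 1) (by omega)
  · rintro h (_ | T) hT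
    · simpa using hc
    · simpa [add_assoc] using h T (by omega)

end FirstPassage

open FirstPassage

/-- The condition in `pathCount`, for tuples of any length so that it can be passed to tails. -/
def IsFirstPassage (i m : ℕ) {N : ℕ} (s : Fin N → ℤ) : Prop :=
  (∀ t, s t = 1 ∨ s t = -1) ∧ #{t | s t = 1} = i ∧ ∀ T ≤ m + 2 * i, 0 ≤ (m : ℤ) + prefixSum s T

namespace IsFirstPassage

variable {i m L : ℕ} {v : Fin L → ℤ}

lemma finite_setOf (i m N : ℕ) : {s : Fin N → ℤ | IsFirstPassage i m s}.Finite := by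
  refine Set.Finite.subset (Set.Finite.pi (t := fun _ => ({1, -1} : Set ℤ)) ?_) ?_
  · intro; simp
  · intro s hs t _
    simpa using hs.1 t

lemma head_eq {a : ℤ} (h : IsFirstPassage i m (Fin.cons a v : Fin (L + 1) → ℤ)) :
    a = 1 ∨ a = -1 := by
  simpa using h.1 0

lemma cons_neg_one_iff :
    IsFirstPassage i (m + 1) (Fin.cons (-1) v : Fin (L + 1) → ℤ) ↔ IsFirstPassage i m v := by
  have hB : m + 1 + 2 * i = m + 2 * i + 1 := by omega
  simp only [IsFirstPassage, Fin.forall_fin_succ, Fin.cons_zero, Fin.cons_succ,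
    card_filter_cons_eq_one, hB]
  rw [forall_le_succ_prefixSum_cons _ _ (by positivity)]
  norm_num

lemma cons_one_iff :
    IsFirstPassage (i + 1) (m + 1) (Fin.cons 1 v : Fin (L + 1) → ℤ) ↔
      IsFirstPassage i (m + 2) v := by
  have hB : m + 1 + 2 * (i + 1) = m + 2 + 2 * i + 1 := by omega
  simp only [IsFirstPassage, Fin.forall_fin_succ, Fin.cons_zero, Fin.cons_succ,
    card_filter_cons_eq_one, hB]
  rw [forall_le_succ_prefixSum_cons _ _ (by positivity)]
  simp [add_comm 1, add_assoc, one_add_one_eq_two]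

lemma not_zero_cons_one : ¬ IsFirstPassage 0 (m + 1) (Fin.cons 1 v : Fin (L + 1) → ℤ) := by
  intro h
  have := h.2.1
  rw [card_filter_cons_eq_one] at this
  simp at this

end IsFirstPassage

open IsFirstPassage

lemma pathCount_eq_ncard {i m N : ℕ} (hN : N = m + 2 * i + 1) :
    pathCount i m = {s : Fin N → ℤ | IsFirstPassage i m s}.ncard := by
  subst hN
  exact (Nat.card_coe_set_eq _).symm

lemma setOf_isFirstPassage_succ_succ (i m L : ℕ) :
    {s : Fin (L + 1) → ℤ | IsFirstPassage (i + 1) (m + 1) s} =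
      Fin.cons (-1) '' {v | IsFirstPassage (i + 1) m v} ∪
        Fin.cons 1 '' {v | IsFirstPassage i (m + 2) v} := by
  ext s
  refine Fin.consCases (fun a v => ?_) s
  simp only [Set.mem_ofPred_eq, Set.mem_union, Set.mem_image, Fin.cons_inj]
  constructor
  · intro h
    rcases head_eq h with rfl | rfl
    · exact Or.inr ⟨v, cons_one_iff.mp h, rfl, rfl⟩
    · exact Or.inl ⟨v, cons_neg_one_iff.mp h, rfl, rfl⟩
  · rintro (⟨v, h, rfl, rfl⟩ | ⟨v, h, rfl, rfl⟩)
    · exact cons_neg_one_iff.mpr h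
    · exact cons_one_iff.mpr h

lemma setOf_isFirstPassage_zero_succ (m L : ℕ) :
    {s : Fin (L + 1) → ℤ | IsFirstPassage 0 (m + 1) s} =
      Fin.cons (-1) '' {v | IsFirstPassage 0 m v} := by
  ext s
  refine Fin.consCases (fun a v => ?_) s
  simp only [Set.mem_ofPred_eq, Set.mem_image, Fin.cons_inj]
  constructor
  · intro h
    rcases head_eq h with rfl | rfl
    · exact absurd h not_zero_cons_one
    · exact ⟨v, cons_neg_one_iff.mp h, rfl, rfl⟩
  · rintro ⟨v, h, rfl, rfl⟩
    exact cons_neg_one_iff.mpr h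

lemma pathCount_succ_succ (i m : ℕ) :
    pathCount (i + 1) (m + 1) = pathCount (i + 1) m + pathCount i (m + 2) := by
  rw [pathCount_eq_ncard (N := m + 2 * i + 3 + 1) (by omega), setOf_isFirstPassage_succ_succ,
    Set.ncard_union_eq (Set.disjoint_image_image fun _ _ _ _ => by simp)
      ((finite_setOf _ _ _).image _) ((finite_setOf _ _ _).image _),
    Set.ncard_image_of_injective _ (Fin.cons_right_injective _),
    Set.ncard_image_of_injective _ (Fin.cons_right_injective _),
    ← pathCount_eq_ncard (by omega), ← pathCount_eq_ncard (by omega)]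

lemma pathCount_zero_succ (m : ℕ) : pathCount 0 (m + 1) = pathCount 0 m := by
  rw [pathCount_eq_ncard (N := m + 1 + 1) rfl, setOf_isFirstPassage_zero_succ,
    Set.ncard_image_of_injective _ (Fin.cons_right_injective _), pathCount_eq_ncard rfl]

noncomputable def passageWeight (I : ℝ) (i m : ℕ) : ℝ :=
  pathCount i m * (1 - I) ^ i * I ^ (m + 1 + i)

lemma F_eq_sum_passageWeight (I : ℝ) (l m n : ℕ) :
    F I l m n = ∑ i ∈ range (l - n), passageWeight I i m := rfl

lemma passageWeight_zero_succ (I : ℝ) (m : ℕ) :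
    passageWeight I 0 (m + 1) = I * passageWeight I 0 m := by
  simp only [passageWeight, pathCount_zero_succ]
  ring

lemma passageWeight_succ_succ (I : ℝ) (i m : ℕ) :
    passageWeight I (i + 1) (m + 1) =
      I * passageWeight I (i + 1) m + (1 - I) * passageWeight I i (m + 2) := by
  simp only [passageWeight, pathCount_succ_succ]
  push_cast
  ring

/-- For every real `I`, all integers `m ≥ 1` and `0 ≤ n < l`, the success-probability
function satisfies the two-dimensional random-walk recursion
`F_I(l,m,n) = I·F_I(l,m-1,n) + (1-I)·F_I(l,m+1,n+1)`. -/
theorem F_recursion (I : ℝ) (l m n : ℕ) (hnl : n < l) :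
    F I l (m + 1) n = I * F I l m n + (1 - I) * F I l (m + 2) (n + 1) := by
  obtain ⟨k, hk, hk'⟩ : ∃ k, l - n = k + 1 ∧ l - (n + 1) = k := ⟨l - (n + 1), by omega, rfl⟩
  simp only [F_eq_sum_passageWeight, hk, hk']
  calc ∑ i ∈ range (k + 1), passageWeight I i (m + 1)
      = ∑ i ∈ range k, passageWeight I (i + 1) (m + 1) + passageWeight I 0 (m + 1) :=
        sum_range_succ' _ _
    _ = I * (∑ i ∈ range k, passageWeight I (i + 1) m + passageWeight I 0 m) +
          (1 - I) * ∑ i ∈ range k, passageWeight I i (m + 2) := by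
        simp only [passageWeight_succ_succ, passageWeight_zero_succ, sum_add_distrib, ← mul_sum]
        ring
    _ = I * ∑ i ∈ range (k + 1), passageWeight I i m +
          (1 - I) * ∑ i ∈ range k, passageWeight I i (m + 2) := by
        rw [sum_range_succ']
end

section
/- For every real number I and all integers l and n with 0 ≤ n < l, F_I(l,0,n) = I + (1−I)·F_I(l,1,n+1); that is, the random-walk recursion at the boundary m = 0 holds with the convention that the hitting probability from lag −1 equals 1. -/
/-!
After splitting off the `i = 0` term, the identity reduces to `a(0,0) = 1` and
`a(i+1,0) = a(i,1)`. The second holds because a walk from `0` that must stay nonnegative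
has to step up first, and removing that step leaves a walk from `1` with one up-step fewer.
-/

open Finset

def IsNonnegWalk {N : ℕ} (m : ℤ) (k H : ℕ) (s : Fin N → ℤ) : Prop :=
  (∀ t, s t = 1 ∨ s t = -1) ∧ #{t | s t = 1} = k ∧
    ∀ T ≤ H, 0 ≤ m + ∑ t ∈ univ.filter (fun t : Fin N => (t : ℕ) < T), s t

theorem pathCount_eq_card (i m : ℕ) :
    pathCount i m = Nat.card {s : Fin (m + 2 * i + 1) → ℤ // IsNonnegWalk m i (m + 2 * i) s} :=
  rfl

theorem Nat.forall_le_succ_left {p : ℕ → Prop} {n : ℕ} :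
    (∀ m ≤ n + 1, p m) ↔ p 0 ∧ ∀ m ≤ n, p (m + 1) := by
  simp only [← Nat.lt_succ_iff, Nat.forall_lt_succ_left]

theorem sum_filter_val_lt_succ_cons {M : Type*} [AddCommMonoid M] {N : ℕ} (a : M)
    (s : Fin N → M) (T : ℕ) :
    ∑ t ∈ univ.filter (fun t : Fin (N + 1) => (t : ℕ) < T + 1), (Fin.cons a s : Fin (N + 1) → M) t
      = a + ∑ t ∈ univ.filter (fun t : Fin N => (t : ℕ) < T), s t := by
  simp [sum_filter, Fin.sum_univ_succ]

theorem isNonnegWalk_cons_one_iff {N : ℕ} (m : ℤ) (k H : ℕ) (s : Fin N → ℤ) :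
    IsNonnegWalk m (k + 1) (H + 1) (Fin.cons 1 s : Fin (N + 1) → ℤ) ↔
      0 ≤ m ∧ IsNonnegWalk (m + 1) k H s := by
  simp only [IsNonnegWalk, Fin.forall_fin_succ, Fin.cons_zero, Fin.cons_succ,
    Fin.card_filter_univ_succ', Nat.forall_le_succ_left, sum_filter_val_lt_succ_cons, ← add_assoc,
    Int.reduceNeg, reduceCtorEq, or_false, true_and, ↓reduceIte, add_comm 1,
    Nat.add_right_cancel_iff, not_lt_zero, filter_false, sum_empty, add_zero]
  tauto

theorem IsNonnegWalk.head_eq_one {N k H : ℕ} {s : Fin (N + 1) → ℤ}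
    (hs : IsNonnegWalk 0 k (H + 1) s) : s 0 = 1 := by
  have h := hs.2.2 1 (by omega)
  rw [← Fin.cons_self_tail s, sum_filter_val_lt_succ_cons] at h
  rcases hs.1 0 with h0 | h0
  · exact h0
  · simp [h0] at h

def nonnegWalkTailEquiv (N k H : ℕ) :
    {s : Fin (N + 1) → ℤ // IsNonnegWalk 0 (k + 1) (H + 1) s} ≃
      {s : Fin N → ℤ // IsNonnegWalk 1 k H s} where
  toFun s := ⟨Fin.tail s.1, by
    have hs := s.2
    rw [← Fin.cons_self_tail s.1, s.2.head_eq_one, isNonnegWalk_cons_one_iff] at hs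
    simpa using hs.2⟩
  invFun s := ⟨Fin.cons 1 s.1, by
    rw [isNonnegWalk_cons_one_iff]
    simpa using s.2⟩
  left_inv s := Subtype.ext <| by
    show Fin.cons 1 (Fin.tail s.1) = s.1
    rw [← s.2.head_eq_one, Fin.cons_self_tail]
  right_inv s := Subtype.ext (Fin.tail_cons (α := fun _ => ℤ) 1 s.1)

theorem pathCount_succ_zero (i : ℕ) : pathCount (i + 1) 0 = pathCount i 1 := by
  rw [pathCount_eq_card, pathCount_eq_card, show 0 + 2 * (i + 1) = 1 + 2 * i + 1 by ring]
  exact Nat.card_congr (nonnegWalkTailEquiv _ _ _)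

theorem IsNonnegWalk.eq_neg_one {N : ℕ} {m : ℤ} {H : ℕ} {s : Fin N → ℤ}
    (hs : IsNonnegWalk m 0 H s) : s = fun _ => -1 := by
  funext t
  have hne : s t ≠ 1 := filter_eq_empty_iff.mp (card_eq_zero.mp hs.2.1) (mem_univ t)
  exact (hs.1 t).resolve_left hne

theorem isNonnegWalk_const_neg_one (N : ℕ) {m : ℤ} {H : ℕ} (hH : H ≤ m) :
    IsNonnegWalk m 0 H (fun _ : Fin N => -1) := by
  refine ⟨fun _ => Or.inr rfl, by simp, fun T hT => ?_⟩
  simp only [sum_const, Fin.card_filter_val_lt, smul_neg, nsmul_eq_mul, mul_one]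
  omega

theorem pathCount_zero (m : ℕ) : pathCount 0 m = 1 := by
  rw [pathCount_eq_card, Nat.card_eq_one_iff_unique]
  exact ⟨⟨fun s t => Subtype.ext (s.2.eq_neg_one.trans t.2.eq_neg_one.symm)⟩,
    ⟨⟨_, isNonnegWalk_const_neg_one _ (by simp)⟩⟩⟩

/-- For every real `I` and all integers `0 ≤ n < l`, `F_I(l,0,n) = I + (1-I)·F_I(l,1,n+1)`:
the random-walk recursion at the boundary `m = 0`, with the convention that the hitting
probability from lag `-1` equals `1`. -/
theorem F_recursion_boundary (I : ℝ) (l n : ℕ) (hnl : n < l) :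
    F I l 0 n = I + (1 - I) * F I l 1 (n + 1) := by
  obtain ⟨k, hk⟩ : ∃ k, l - n = k + 1 := ⟨l - (n + 1), by omega⟩
  rw [F, F, hk, show l - (n + 1) = k by omega, sum_range_succ', mul_sum, pathCount_zero, add_comm]
  congr 1
  · simp
  · refine sum_congr rfl fun i _ => ?_
    rw [pathCount_succ_zero]
    ring
end

section
/- For every real number I with 0 ≤ I < 1 and every integer m ≥ 0, the family i ↦ a(i,m)·(1−I)^i·I^{m+1+i} is summable, and its sum ∑_{i=0}^{∞} a(i,m)·(1−I)^i·I^{m+1+i} equals (I/(1−I))^{m+1} if 0 ≤ I < 1/2 and equals 1 if 1/2 ≤ I < 1. Equivalently, for each fixed n ≥ 0 and m ≥ 0, F_I(l,m,n) converges as l → ∞ to (I/(1−I))^{m+1} when 0 ≤ I < 1/2 and to 1 when 1/2 ≤ I < 1. -/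
/-! Let `u k` be the probability that the walk with down-steps of probability `p`, started at
level `k - 1`, ever reaches `-1`, as a series over the number of up-steps. Splitting off the
first step gives `u 0 = 1` and `u (k + 1) = (1 - p) u (k + 2) + p u k`. The same recursion on
partial sums bounds them by `ρ ^ k`, where `ρ = min 1 (p / (1 - p))` solves
`ρ = p + (1 - p) ρ ^ 2`, so the defect `h k = ρ ^ k - u k` solves the recursion with `h 0 = 0`
and `0 ≤ h k ≤ ρ ^ k`. Its first integral `(1 - p) h (k + 1) = p h k + (1 - p) h 1` gives
`h 1 ≤ h (k + 1)`, and even `k h 1 ≤ h k` when `p ≥ 1/2`; as `ρ ^ k → 0` in the first case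
and `ρ = 1` in the second, `h 1 = 0` and hence `h = 0`. -/

open Finset Filter Topology

section Cons

variable {α : Type*} {n : ℕ}

lemma sum_fin_cons_lt_succ {M : Type*} [AddCommMonoid M] (a : M) (s : Fin n → M) (T : ℕ) :
    ∑ t : Fin (n + 1) with t.val < T + 1, (Fin.cons a s : Fin (n + 1) → M) t =
      a + ∑ t : Fin n with t.val < T, s t := by
  simp [Finset.sum_filter, Fin.sum_univ_succ]

lemma card_subtype_fin_cons {P : (Fin (n + 1) → α) → Prop} {a : α}
    (hP : ∀ s, P s → s 0 = a) :
    Nat.card {s // P s} = Nat.card {t : Fin n → α // P (Fin.cons a t)} :=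
  Nat.card_congr
    { toFun := fun s => ⟨Fin.tail s.1, by simpa [← hP s.1 s.2] using s.2⟩
      invFun := fun t => ⟨Fin.cons a t.1, t.2⟩
      left_inv := fun s => Subtype.ext (by simp [← hP s.1 s.2])
      right_inv := fun t => by simp }

lemma card_subtype_fin_cons_add {P : (Fin (n + 1) → α) → Prop} [Finite {s // P s}] {a b : α}
    (hab : a ≠ b) (hP : ∀ s, P s → s 0 = a ∨ s 0 = b) :
    Nat.card {s // P s} = Nat.card {t : Fin n → α // P (Fin.cons a t)} +
      Nat.card {t : Fin n → α // P (Fin.cons b t)} := by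
  classical
  have hfin (c : α) : Finite {s // P s ∧ s 0 = c} :=
    Finite.of_injective (fun s => (⟨s.1, s.2.1⟩ : {s // P s})) fun _ _ h => by
      simpa [Subtype.ext_iff] using h
  have hsplit : {s // P s} ≃ {s // P s ∧ s 0 = a} ⊕ {s // P s ∧ s 0 = b} :=
    (Equiv.subtypeEquivRight fun s => ⟨fun h => (hP s h).imp (⟨h, ·⟩) (⟨h, ·⟩),
      fun h => h.elim And.left And.left⟩).trans
    (subtypeOrEquiv _ _ fun _ ha hb s hs => hab ((ha s hs).2.symm.trans (hb s hs).2))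
  rw [Nat.card_congr hsplit, Nat.card_sum, card_subtype_fin_cons (fun _ h => h.2),
    card_subtype_fin_cons (fun _ h => h.2)]
  simp

end Cons

/-- With `n = m + 2 * i + 1` steps such a walk ends at `-1`, so it reaches `-1` exactly at its
last step. -/
def IsFirstPassageWalk (m : ℤ) (i : ℕ) {n : ℕ} (s : Fin n → ℤ) : Prop :=
  (∀ t, s t = 1 ∨ s t = -1) ∧ #{t | s t = 1} = i ∧
    ∀ T < n, 0 ≤ m + ∑ t : Fin n with t.val < T, s t

noncomputable def walkCount (m : ℤ) (i n : ℕ) : ℕ :=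
  Nat.card {s : Fin n → ℤ // IsFirstPassageWalk m i s}

namespace IsFirstPassageWalk

variable {m : ℤ} {i n : ℕ}

lemma nonneg {s : Fin (n + 1) → ℤ} (hs : IsFirstPassageWalk m i s) : 0 ≤ m := by
  simpa using hs.2.2 0 n.succ_pos

lemma nonneg_fin_cons_iff {a : ℤ} {s : Fin n → ℤ} :
    (∀ T < n + 1,
        0 ≤ m + ∑ t : Fin (n + 1) with t.val < T, (Fin.cons a s : Fin (n + 1) → ℤ) t) ↔
      0 ≤ m ∧ ∀ T < n, 0 ≤ m + a + ∑ t : Fin n with t.val < T, s t := by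
  simp only [Nat.forall_lt_succ_left, sum_fin_cons_lt_succ, add_assoc]
  simp

lemma fin_cons_one_iff {s : Fin n → ℤ} :
    IsFirstPassageWalk m (i + 1) (Fin.cons 1 s : Fin (n + 1) → ℤ) ↔
      0 ≤ m ∧ IsFirstPassageWalk (m + 1) i s := by
  simp only [IsFirstPassageWalk, nonneg_fin_cons_iff]
  simp [Fin.forall_fin_succ, Fin.card_filter_univ_succ]
  tauto

lemma not_fin_cons_one {s : Fin n → ℤ} :
    ¬ IsFirstPassageWalk m 0 (Fin.cons 1 s : Fin (n + 1) → ℤ) := by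
  simp [IsFirstPassageWalk, Fin.card_filter_univ_succ]

lemma fin_cons_neg_one_iff {s : Fin n → ℤ} :
    IsFirstPassageWalk m i (Fin.cons (-1) s : Fin (n + 1) → ℤ) ↔
      0 ≤ m ∧ IsFirstPassageWalk (m - 1) i s := by
  simp only [IsFirstPassageWalk, nonneg_fin_cons_iff]
  simp [Fin.forall_fin_succ, Fin.card_filter_univ_succ, sub_eq_add_neg]
  tauto

end IsFirstPassageWalk

instance (m : ℤ) (i n : ℕ) : Finite {s : Fin n → ℤ // IsFirstPassageWalk m i s} :=
  Finite.of_injective (fun s t => (⟨s.1 t, s.2.1 t⟩ : ({1, -1} : Set ℤ))) fun _ _ h =>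
    Subtype.ext (funext fun t => congrArg Subtype.val (congrFun h t))

section walkCount

variable {m : ℤ} {i n : ℕ}

lemma walkCount_zero_zero : walkCount m 0 0 = 1 :=
  Nat.card_eq_one_iff_unique.2
    ⟨inferInstance, ⟨⟨Fin.elim0, by simp [IsFirstPassageWalk]⟩⟩⟩

lemma walkCount_succ_of_neg (hm : m < 0) : walkCount m i (n + 1) = 0 :=
  have : IsEmpty {s : Fin (n + 1) → ℤ // IsFirstPassageWalk m i s} :=
    ⟨fun s => hm.not_ge s.2.nonneg⟩
  Nat.card_of_isEmpty

lemma walkCount_zero_succ (hm : 0 ≤ m) : walkCount m 0 (n + 1) = walkCount (m - 1) 0 n := by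
  rw [walkCount, card_subtype_fin_cons_add (by norm_num : (1 : ℤ) ≠ -1) fun s hs => hs.1 0]
  simp [walkCount, IsFirstPassageWalk.not_fin_cons_one, IsFirstPassageWalk.fin_cons_neg_one_iff, hm]

lemma walkCount_succ_succ (hm : 0 ≤ m) :
    walkCount m (i + 1) (n + 1) = walkCount (m + 1) i n + walkCount (m - 1) (i + 1) n := by
  rw [walkCount, card_subtype_fin_cons_add (by norm_num : (1 : ℤ) ≠ -1) fun s hs => hs.1 0]
  simp [walkCount, IsFirstPassageWalk.fin_cons_one_iff, IsFirstPassageWalk.fin_cons_neg_one_iff, hm]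

lemma walkCount_neg_one (i : ℕ) : walkCount (-1) i (2 * i) = if i = 0 then 1 else 0 := by
  rcases i with _ | i
  · exact walkCount_zero_zero
  · exact walkCount_succ_of_neg (by norm_num)

end walkCount

lemma pathCount_eq_walkCount (i m : ℕ) : pathCount i m = walkCount m i (m + 2 * i + 1) := by
  refine Nat.card_congr (Equiv.subtypeEquivRight fun s => ?_)
  simp [IsFirstPassageWalk]

/-- The probability that the walk started at level `k - 1`, stepping down with probability `p`,
first reaches `-1` after exactly `i` up-steps. -/
noncomputable def hitWeight (p : ℝ) (k i : ℕ) : ℝ :=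
  walkCount ((k : ℤ) - 1) i (k + 2 * i) * (1 - p) ^ i * p ^ (k + i)

section hitWeight

variable {p : ℝ}

lemma hitWeight_zero (i : ℕ) : hitWeight p 0 i = if i = 0 then 1 else 0 := by
  rcases i with _ | i <;> simp [hitWeight, walkCount_zero_zero, walkCount_neg_one]

lemma hitWeight_succ_zero (k : ℕ) : hitWeight p (k + 1) 0 = p * hitWeight p k 0 := by
  simp [hitWeight, walkCount_zero_succ (Int.natCast_nonneg k), pow_succ]
  ring

lemma hitWeight_succ_succ (k i : ℕ) :
    hitWeight p (k + 1) (i + 1) = (1 - p) * hitWeight p (k + 2) i + p * hitWeight p k (i + 1) := by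
  have hlen : k + 1 + 2 * (i + 1) = k + 2 + 2 * i + 1 := by ring
  have hlen' : k + 2 * (i + 1) = k + 2 + 2 * i := by ring
  simp only [hitWeight, hlen, hlen', Nat.cast_add_one, add_sub_cancel_right,
    walkCount_succ_succ (Int.natCast_nonneg k)]
  push_cast
  ring

lemma hitWeight_succ_eq_pathCount (m i : ℕ) :
    hitWeight p (m + 1) i = pathCount i m * (1 - p) ^ i * p ^ (m + 1 + i) := by
  rw [hitWeight, pathCount_eq_walkCount]
  push_cast
  ring_nf

lemma hitWeight_nonneg (hp0 : 0 ≤ p) (hp1 : p ≤ 1) (k i : ℕ) : 0 ≤ hitWeight p k i := by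
  have : 0 ≤ 1 - p := sub_nonneg.2 hp1
  unfold hitWeight
  positivity

lemma sum_range_hitWeight_succ (N k : ℕ) :
    ∑ i ∈ range (N + 1), hitWeight p (k + 1) i =
      (1 - p) * ∑ i ∈ range N, hitWeight p (k + 2) i +
        p * ∑ i ∈ range (N + 1), hitWeight p k i := by
  simp only [sum_range_succ' _ N, hitWeight_succ_succ, hitWeight_succ_zero, sum_add_distrib,
    mul_sum, mul_add]
  ring

end hitWeight

noncomputable def descentProb (p : ℝ) : ℝ := if p < 1 / 2 then p / (1 - p) else 1

section recurrence

variable {p : ℝ} {h : ℕ → ℝ}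

lemma descentProb_nonneg (hp0 : 0 ≤ p) (hp1 : p < 1) : 0 ≤ descentProb p := by
  unfold descentProb
  split_ifs
  · exact div_nonneg hp0 (sub_nonneg.2 hp1.le)
  · exact zero_le_one

lemma descentProb_pow_succ (hp1 : p < 1) (k : ℕ) :
    descentProb p ^ (k + 1) = (1 - p) * descentProb p ^ (k + 2) + p * descentProb p ^ k := by
  have hfix : descentProb p = (1 - p) * descentProb p ^ 2 + p := by
    unfold descentProb
    split_ifs
    · field_simp [(sub_pos.2 hp1).ne']
      ring
    · ring
  linear_combination descentProb p ^ k * hfix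

lemma first_integral_of_recurrence (h0 : h 0 = 0)
    (hrec : ∀ k, h (k + 1) = (1 - p) * h (k + 2) + p * h k) (k : ℕ) :
    (1 - p) * h (k + 1) = p * h k + (1 - p) * h 1 := by
  induction k with
  | zero => simp [h0]
  | succ k ih => linear_combination ih - hrec k

lemma apply_one_eq_zero_of_recurrence (hp0 : 0 ≤ p) (hp1 : p < 1) (h0 : h 0 = 0)
    (hrec : ∀ k, h (k + 1) = (1 - p) * h (k + 2) + p * h k) (hnonneg : ∀ k, 0 ≤ h k)
    (hle : ∀ k, h k ≤ descentProb p ^ k) : h 1 = 0 := by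
  have hq : 0 < 1 - p := sub_pos.2 hp1
  have hfirst := first_integral_of_recurrence h0 hrec
  refine le_antisymm ?_ (hnonneg 1)
  by_cases hp : p < 1 / 2
  · have hρ : descentProb p < 1 := by
      rw [descentProb, if_pos hp, div_lt_one hq]
      linarith
    have hlim : Tendsto (fun k => descentProb p ^ (k + 1)) atTop (𝓝 0) :=
      (tendsto_pow_atTop_nhds_zero_of_lt_one (descentProb_nonneg hp0 hp1) hρ).comp
        (tendsto_add_atTop_nat 1)
    have hmono (k : ℕ) : h 1 ≤ h (k + 1) :=
      le_of_mul_le_mul_left (by linarith [hfirst k, mul_nonneg hp0 (hnonneg k)]) hq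
    exact ge_of_tendsto' hlim fun k => (hmono k).trans (hle (k + 1))
  · have hρ : descentProb p = 1 := if_neg hp
    have hlin (k : ℕ) : k * h 1 ≤ h k := by
      induction k with
      | zero => simp [h0]
      | succ k ih =>
        push_cast
        nlinarith [hfirst k, hnonneg k]
    by_contra! hpos
    obtain ⟨k, hk⟩ := exists_nat_gt (1 / h 1)
    linarith [(div_lt_iff₀ hpos).1 hk, hlin k, hle k, hρ ▸ one_pow k]

lemma eq_zero_of_recurrence (hp0 : 0 ≤ p) (hp1 : p < 1) (h0 : h 0 = 0)
    (hrec : ∀ k, h (k + 1) = (1 - p) * h (k + 2) + p * h k) (hnonneg : ∀ k, 0 ≤ h k)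
    (hle : ∀ k, h k ≤ descentProb p ^ k) (k : ℕ) : h k = 0 := by
  have h1 := apply_one_eq_zero_of_recurrence hp0 hp1 h0 hrec hnonneg hle
  induction k with
  | zero => exact h0
  | succ k ih =>
    have := first_integral_of_recurrence h0 hrec k
    rw [ih, h1] at this
    simpa [(sub_pos.2 hp1).ne'] using this

end recurrence

section hasSum

variable {p : ℝ} (hp0 : 0 ≤ p) (hp1 : p < 1)
include hp0 hp1

lemma sum_range_hitWeight_le (N k : ℕ) :
    ∑ i ∈ range N, hitWeight p k i ≤ descentProb p ^ k := by
  induction N generalizing k with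
  | zero => simpa using pow_nonneg (descentProb_nonneg hp0 hp1) k
  | succ N ihN =>
    induction k with
    | zero => simp [hitWeight_zero]
    | succ k ihk =>
      rw [sum_range_hitWeight_succ, descentProb_pow_succ hp1]
      exact add_le_add (mul_le_mul_of_nonneg_left (ihN (k + 2)) (sub_nonneg.2 hp1.le))
        (mul_le_mul_of_nonneg_left ihk hp0)

lemma summable_hitWeight (k : ℕ) : Summable (hitWeight p k) :=
  summable_of_sum_range_le (hitWeight_nonneg hp0 hp1.le k) (sum_range_hitWeight_le hp0 hp1 · k)

lemma tsum_hitWeight_succ (k : ℕ) :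
    ∑' i, hitWeight p (k + 1) i =
      (1 - p) * ∑' i, hitWeight p (k + 2) i + p * ∑' i, hitWeight p k i := by
  rw [(summable_hitWeight hp0 hp1 (k + 1)).tsum_eq_zero_add,
    (summable_hitWeight hp0 hp1 k).tsum_eq_zero_add]
  simp only [hitWeight_succ_succ, hitWeight_succ_zero]
  rw [Summable.tsum_add, tsum_mul_left, tsum_mul_left]
  · ring
  · exact (summable_hitWeight hp0 hp1 (k + 2)).mul_left _
  · exact ((summable_hitWeight hp0 hp1 k).comp_injective (add_left_injective 1)).mul_left _

lemma hasSum_hitWeight (k : ℕ) : HasSum (hitWeight p k) (descentProb p ^ k) := by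
  set u := fun k => ∑' i, hitWeight p k i
  have hdefect := eq_zero_of_recurrence (h := fun k => descentProb p ^ k - u k) hp0 hp1
    (by simp [u, hitWeight_zero])
    (fun k => by simp only [u, descentProb_pow_succ hp1 k, tsum_hitWeight_succ hp0 hp1 k]; ring)
    (fun k => sub_nonneg.2 (Real.tsum_le_of_sum_range_le (hitWeight_nonneg hp0 hp1.le k)
      (sum_range_hitWeight_le hp0 hp1 · k)))
    (fun k => sub_le_self _ (tsum_nonneg (hitWeight_nonneg hp0 hp1.le k))) k
  rw [sub_eq_zero] at hdefect
  exact hdefect ▸ (summable_hitWeight hp0 hp1 k).hasSum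

end hasSum

/-- For `0 ≤ I < 1` and `m ≥ 0`, the family `i ↦ a(i,m)(1-I)^i I^(m+1+i)` is summable with
sum `(I/(1-I))^(m+1)` if `I < 1/2` and `1` if `1/2 ≤ I < 1`; equivalently, for each fixed
`n`, `F_I(l,m,n)` converges to that value as `l → ∞`. -/
theorem F_limit (I : ℝ) (hI0 : 0 ≤ I) (hI1 : I < 1) (m : ℕ) :
    Summable (fun i : ℕ => (pathCount i m : ℝ) * (1 - I) ^ i * I ^ (m + 1 + i)) ∧
    (∑' i : ℕ, (pathCount i m : ℝ) * (1 - I) ^ i * I ^ (m + 1 + i)) =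
      (if I < 1 / 2 then (I / (1 - I)) ^ (m + 1) else 1) ∧
    ∀ n : ℕ, Filter.Tendsto (fun l : ℕ => F I l m n) Filter.atTop
      (nhds (if I < 1 / 2 then (I / (1 - I)) ^ (m + 1) else 1)) := by
  have hsum := hasSum_hitWeight hI0 hI1 (m + 1)
  simp only [descentProb, ite_pow, one_pow, funext (hitWeight_succ_eq_pathCount (p := I) m)] at hsum
  refine ⟨hsum.summable, hsum.tsum_eq, fun n => ?_⟩
  exact hsum.tendsto_sum_nat.comp (tendsto_sub_atTop_nat n)
end

section
/- For every real number I with 0 < I < 1, the family i ↦ C_i·(I·(1−I))^i is summable and ∑_{i=0}^{∞} C_i·(I·(1−I))^i = 1/(1−I) if 0 < I < 1/2 and = 1/I if 1/2 ≤ I < 1 (equivalently, the sum equals 1/max(I, 1−I)). -/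
/-!
Put `x = I(1-I) ≤ 1/4`. Since `∑_{i<n} C_i/4^i = 2 - 2·binom(2n,n)/4^n`, the series
`S = ∑ C_i x^i` converges absolutely with `S ≤ 2`, and Segner's recurrence turns its Cauchy
square into `x S² = S - 1`. This quadratic factors as `(I S - 1)((1 - I) S - 1) = 0`, so `S` is
`1/I` or `1/(1-I)`, and the bound `S ≤ 2` selects the smaller root `1/max(I, 1-I)`.
-/

open Finset

theorem sum_range_catalan_div_four_pow (n : ℕ) :
    ∑ i ∈ range n, (catalan i : ℝ) / 4 ^ i = 2 - 2 * n.centralBinom / 4 ^ n := by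
  induction n with
  | zero => simp
  | succ n ih =>
    have hcat : ((n : ℝ) + 1) * catalan n = n.centralBinom := by
      exact_mod_cast succ_mul_catalan_eq_centralBinom n
    have hbinom : ((n : ℝ) + 1) * (n + 1).centralBinom = 2 * (2 * n + 1) * n.centralBinom := by
      exact_mod_cast Nat.succ_mul_centralBinom_succ n
    have hstep : (catalan n : ℝ) = 2 * n.centralBinom - (n + 1).centralBinom / 2 := by
      refine mul_left_cancel₀ n.cast_add_one_ne_zero ?_
      linear_combination hcat + hbinom / 2
    rw [sum_range_succ, ih, hstep, pow_succ]
    field_simp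
    ring

theorem sum_range_norm_catalan_mul_pow_le_two {x : ℝ} (hx : |x| ≤ 1 / 4) (n : ℕ) :
    ∑ i ∈ range n, ‖(catalan i : ℝ) * x ^ i‖ ≤ 2 :=
  calc ∑ i ∈ range n, ‖(catalan i : ℝ) * x ^ i‖
      ≤ ∑ i ∈ range n, (catalan i : ℝ) / 4 ^ i := by
        refine sum_le_sum fun i _ => ?_
        rw [norm_mul, Real.norm_natCast, norm_pow, Real.norm_eq_abs, div_eq_mul_one_div,
          ← one_div_pow]
        gcongr
    _ ≤ 2 := by
        rw [sum_range_catalan_div_four_pow]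
        linarith [show (0 : ℝ) ≤ 2 * n.centralBinom / 4 ^ n by positivity]

theorem summable_norm_catalan_mul_pow {x : ℝ} (hx : |x| ≤ 1 / 4) :
    Summable fun i => ‖(catalan i : ℝ) * x ^ i‖ :=
  summable_of_sum_range_le (fun _ => norm_nonneg _) (sum_range_norm_catalan_mul_pow_le_two hx)

theorem tsum_catalan_mul_pow_le_two {x : ℝ} (hx : |x| ≤ 1 / 4) :
    ∑' i, (catalan i : ℝ) * x ^ i ≤ 2 :=
  calc ∑' i, (catalan i : ℝ) * x ^ i
      ≤ ‖∑' i, (catalan i : ℝ) * x ^ i‖ := Real.le_norm_self _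
    _ ≤ ∑' i, ‖(catalan i : ℝ) * x ^ i‖ :=
        norm_tsum_le_tsum_norm (summable_norm_catalan_mul_pow hx)
    _ ≤ 2 := (summable_norm_catalan_mul_pow hx).tsum_le_of_sum_range_le
        (sum_range_norm_catalan_mul_pow_le_two hx)

theorem mul_sq_tsum_catalan_mul_pow {x : ℝ} (hx : |x| ≤ 1 / 4) :
    x * (∑' i, (catalan i : ℝ) * x ^ i) ^ 2 = (∑' i, (catalan i : ℝ) * x ^ i) - 1 := by
  have hs := summable_norm_catalan_mul_pow hx
  have hconv (n : ℕ) : ∑ kl ∈ antidiagonal n,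
      ((catalan kl.1 : ℝ) * x ^ kl.1) * ((catalan kl.2 : ℝ) * x ^ kl.2) =
        catalan (n + 1) * x ^ n := by
    rw [catalan_succ', Nat.cast_sum, sum_mul]
    refine sum_congr rfl fun kl hkl => ?_
    rw [← mem_antidiagonal.mp hkl, pow_add]
    push_cast
    ring
  rw [sq, tsum_mul_tsum_eq_tsum_sum_antidiagonal_of_summable_norm hs hs, ← tsum_mul_left,
    hs.of_norm.tsum_eq_zero_add]
  simp only [hconv, catalan_zero, Nat.cast_one, pow_zero, mul_one, pow_succ]
  ring_nf

theorem eq_ite_of_mul_sq_eq_sub_one {I S : ℝ} (hI0 : 0 < I) (hI1 : I < 1) (hS : S ≤ 2)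
    (h : I * (1 - I) * S ^ 2 = S - 1) :
    S = if I < 1 / 2 then 1 / (1 - I) else 1 / I := by
  have hroots : (I * S - 1) * ((1 - I) * S - 1) = 0 := by linear_combination h
  rcases mul_eq_zero.mp hroots with hroot | hroot <;> split_ifs with hI
  · nlinarith
  · rw [eq_div_iff hI0.ne']; linarith
  · rw [eq_div_iff (by linarith)]; linarith
  · have hhalf : I = 1 / 2 := by nlinarith
    subst hhalf
    norm_num at hroot ⊢
    linarith

/-- For `0 < I < 1`, the family `i ↦ C_i·(I(1-I))^i` (with `C_i` the `i`-th Catalan number)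
is summable and its sum equals `1/(1-I)` if `0 < I < 1/2` and `1/I` if `1/2 ≤ I < 1`. -/
theorem catalan_generating_sum (I : ℝ) (hI0 : 0 < I) (hI1 : I < 1) :
    Summable (fun i : ℕ => (catalan i : ℝ) * (I * (1 - I)) ^ i) ∧
    (∑' i : ℕ, (catalan i : ℝ) * (I * (1 - I)) ^ i) =
      (if I < 1 / 2 then 1 / (1 - I) else 1 / I) := by
  have hx : |I * (1 - I)| ≤ 1 / 4 := by
    rw [abs_of_pos (mul_pos hI0 (sub_pos.mpr hI1))]
    nlinarith [sq_nonneg (1 - 2 * I)]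
  exact ⟨(summable_norm_catalan_mul_pow hx).of_norm,
    eq_ite_of_mul_sq_eq_sub_one hI0 hI1 (tsum_catalan_mul_pow_le_two hx)
      (mul_sq_tsum_catalan_mul_pow hx)⟩
end

section
/- If 0 < I < 1, then for every nonnegative integer Z, the success probability of a time-restricted double-spending attack is strictly increasing in the time restriction: P_TR(I,Z,L+1) > P_TR(I,Z,L) for every nonnegative integer L. -/
/-- Success probability of a time-restricted double-spending attack with `Z` confirmation
blocks and time restriction of `L` honest blocks after confirmation. -/
noncomputable def P_TR (I : ℝ) (Z L : ℕ) : ℝ :=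
  1 - ∑ k ∈ Finset.range (Z + 2),
    (Nat.choose (k + Z) k : ℝ) * I ^ k * (1 - I) ^ (Z + 1) *
      (1 - ∑ i ∈ Finset.range L,
        (pathCount i (Z + 1 - k) : ℝ) * (1 - I) ^ i * I ^ (Z + 2 - k + i))

/-!
Raising `L` by one adds, for every `k`, the term `i = L` of the inner sum; each such term is a
positive weight times `pathCount L (Z + 1 - k)`. That count is positive: the walk from `m` that
first climbs `i` steps and then descends `m + i + 1` steps reaches `-1` only at its last step.
-/

open Finset

theorem Fin.sum_filter_val_lt {M : Type*} [AddCommMonoid M] {n : ℕ} (g : ℕ → M) (T : ℕ) :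
    ∑ t ∈ univ.filter (fun t : Fin n => (t : ℕ) < T), g t = ∑ j ∈ range (min n T), g j := by
  have : (univ.filter fun t : Fin n => (t : ℕ) < T).map Fin.valEmbedding = range (min n T) := by
    ext j
    simp [Fin.exists_iff]
    omega
  rw [← this, sum_map]
  rfl

def upThenDown (i j : ℕ) : ℤ := if j < i then 1 else -1

theorem sum_range_upThenDown (i T : ℕ) :
    ∑ j ∈ range T, upThenDown i j = 2 * min T i - T := by
  induction T with
  | zero => simp
  | succ T ih => rw [sum_range_succ, ih, upThenDown]; split_ifs <;> omega

theorem upThenDown_eq_one_iff {i j : ℕ} : upThenDown i j = 1 ↔ j < i := by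
  unfold upThenDown; split_ifs <;> simp [*]

theorem upThenDown_eq_one_or_neg_one (i j : ℕ) : upThenDown i j = 1 ∨ upThenDown i j = -1 := by
  unfold upThenDown; split_ifs <;> simp

theorem pathCount_pos (i m : ℕ) : 0 < pathCount i m := by
  rw [pathCount, Nat.card_pos_iff]
  constructor
  · refine ⟨⟨fun t => upThenDown i t, fun t => upThenDown_eq_one_or_neg_one i t, ?_,
      fun T hT => ?_⟩⟩
    · simp only [upThenDown_eq_one_iff, Fin.card_filter_val_lt]
      omega
    · rw [Fin.sum_filter_val_lt (upThenDown i), sum_range_upThenDown]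
      omega
  · exact Set.Finite.subset (Set.Finite.pi (t := fun _ => ({1, -1} : Set ℤ)) fun _ => by simp)
      fun s hs t _ => hs.1 t

theorem P_TR_succ_sub (I : ℝ) (Z L : ℕ) :
    P_TR I Z (L + 1) - P_TR I Z L =
      ∑ k ∈ range (Z + 2), (Nat.choose (k + Z) k : ℝ) * I ^ k * (1 - I) ^ (Z + 1) *
        ((pathCount L (Z + 1 - k) : ℝ) * (1 - I) ^ L * I ^ (Z + 2 - k + L)) := by
  rw [P_TR, P_TR, sub_sub_sub_cancel_left, ← sum_sub_distrib]
  refine sum_congr rfl fun k _ => ?_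
  rw [sum_range_succ]
  ring

/-- If `0 < I < 1`, the success probability of a time-restricted double-spending attack is
strictly increasing in the time restriction `L`. -/
theorem P_TR_strictMono (I : ℝ) (hI0 : 0 < I) (hI1 : I < 1) (Z L : ℕ) :
    P_TR I Z L < P_TR I Z (L + 1) := by
  have hI1' : 0 < 1 - I := sub_pos.2 hI1
  rw [← sub_pos, P_TR_succ_sub]
  refine sum_pos (fun k _ => ?_) nonempty_range_add_one
  have := pathCount_pos L (Z + 1 - k)
  have := Nat.choose_pos (Nat.le_add_right k Z)
  positivity
end
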